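/- arXiv:1410.3325 — 2 statements merged into one kernel-verified Lean document; each statement's English description precedes it below -/
import Mathlib

section
/- Let R_ℓ be the free unital associative 𝔽-algebra on x₁,…,x_ℓ with partial derivatives ∂/∂x_i. For f ∈ R_ℓ: m((∂f/∂x_i)^σ) = 0 for all i = 1,…,ℓ if and only if f ∈ 𝔽·1 + [R_ℓ, R_ℓ]. -/
open TensorProduct LinearMap

section DPA

variable (𝔽 : Type) [Field 𝔽] (V : Type) [Ring V] [Algebra 𝔽 V]

/-- The swap `(u ⊗ v)^σ = v ⊗ u` on `V ⊗ V`. -/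
noncomputable abbrev swap2 : V ⊗[𝔽] V ≃ₗ[𝔽] V ⊗[𝔽] V := TensorProduct.comm 𝔽 V V

/-- The cyclic permutation `(u ⊗ v ⊗ w)^σ = w ⊗ u ⊗ v` on `V ⊗ V ⊗ V = (V ⊗ V) ⊗ V`. -/
noncomputable def sigma3 : (V ⊗[𝔽] V) ⊗[𝔽] V ≃ₗ[𝔽] (V ⊗[𝔽] V) ⊗[𝔽] V :=
  (TensorProduct.comm 𝔽 (V ⊗[𝔽] V) V).trans (TensorProduct.assoc 𝔽 V V V).symm

/-- Left multiplication `a · (u ⊗ v) = (a*u) ⊗ v` (outer bimodule structure). -/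
noncomputable def lact2 (a : V) : V ⊗[𝔽] V →ₗ[𝔽] V ⊗[𝔽] V :=
  LinearMap.rTensor V (LinearMap.mulLeft 𝔽 a)

/-- Right multiplication `(u ⊗ v) · c = u ⊗ (v*c)` (outer bimodule structure). -/
noncomputable def ract2 (c : V) : V ⊗[𝔽] V →ₗ[𝔽] V ⊗[𝔽] V :=
  LinearMap.lTensor V (LinearMap.mulRight 𝔽 c)

/-- `(u ⊗ v) ⋆₁ b = (u*b) ⊗ v`. -/
noncomputable def star1r (b : V) : V ⊗[𝔽] V →ₗ[𝔽] V ⊗[𝔽] V :=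
  LinearMap.rTensor V (LinearMap.mulRight 𝔽 b)

/-- `a ⋆₁ (u ⊗ v) = u ⊗ (a*v)`. -/
noncomputable def star1l (a : V) : V ⊗[𝔽] V →ₗ[𝔽] V ⊗[𝔽] V :=
  LinearMap.lTensor V (LinearMap.mulLeft 𝔽 a)

/-- The `•`-product on `V ⊗ V`:  `(u ⊗ v) • (x ⊗ y) = (u*x) ⊗ (y*v)`
(the multiplication of `V ⊗ Vᵒᵖ`). -/
noncomputable def bullet : V ⊗[𝔽] V →ₗ[𝔽] V ⊗[𝔽] V →ₗ[𝔽] V ⊗[𝔽] V :=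
  TensorProduct.lift
    (((TensorProduct.mapBilinear (RingHom.id 𝔽) V V V V).comp (LinearMap.mul 𝔽 V)).compl₂
      ((LinearMap.mul 𝔽 V).flip))

/-- A `2`-fold bracket on `V`: an `𝔽`-bilinear map `V × V → V ⊗ V` satisfying the two
Leibniz rules `{{a,bc}} = {{a,b}}·c + b·{{a,c}}` and `{{ab,c}} = {{a,c}} ⋆₁ b + a ⋆₁ {{b,c}}`. -/
def IsDoubleBracket (Br : V →ₗ[𝔽] V →ₗ[𝔽] V ⊗[𝔽] V) : Prop :=
  (∀ a b c : V, Br a (b * c) = ract2 𝔽 V c (Br a b) + lact2 𝔽 V b (Br a c)) ∧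
  (∀ a b c : V, Br (a * b) c = star1r 𝔽 V b (Br a c) + star1l 𝔽 V a (Br b c))

variable {𝔽 V}

/-- `{{a, B}}_L` : apply the bracket to the first tensor factor. -/
noncomputable def brL (Br : V →ₗ[𝔽] V →ₗ[𝔽] V ⊗[𝔽] V) (a : V) :
    V ⊗[𝔽] V →ₗ[𝔽] (V ⊗[𝔽] V) ⊗[𝔽] V :=
  LinearMap.rTensor V (Br a)

/-- `{{a, B}}_R` : apply the bracket to the second tensor factor. -/
noncomputable def brR (Br : V →ₗ[𝔽] V →ₗ[𝔽] V ⊗[𝔽] V) (a : V) :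
    V ⊗[𝔽] V →ₗ[𝔽] (V ⊗[𝔽] V) ⊗[𝔽] V :=
  (TensorProduct.assoc 𝔽 V V V).symm.toLinearMap ∘ₗ LinearMap.lTensor V (Br a)

variable (𝔽 V)

/-- `ρ₂` : swap the last two tensor factors of `V ⊗ V ⊗ V`. -/
noncomputable def rho2 : (V ⊗[𝔽] V) ⊗[𝔽] V ≃ₗ[𝔽] (V ⊗[𝔽] V) ⊗[𝔽] V :=
  (TensorProduct.assoc 𝔽 V V V).trans
    ((TensorProduct.congr (LinearEquiv.refl 𝔽 V) (TensorProduct.comm 𝔽 V V)).trans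
      (TensorProduct.assoc 𝔽 V V V).symm)

variable {𝔽 V}

/-- Conjugated bullet action used to define the actions `•ᵢ` of `V ⊗ V` on `V ⊗ V ⊗ V`. -/
noncomputable def conjAct (β : V ⊗[𝔽] V →ₗ[𝔽] V ⊗[𝔽] V →ₗ[𝔽] V ⊗[𝔽] V)
    (ρ : (V ⊗[𝔽] V) ⊗[𝔽] V ≃ₗ[𝔽] (V ⊗[𝔽] V) ⊗[𝔽] V) :
    V ⊗[𝔽] V →ₗ[𝔽] (V ⊗[𝔽] V) ⊗[𝔽] V →ₗ[𝔽] (V ⊗[𝔽] V) ⊗[𝔽] V :=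
  (LinearMap.lcomp 𝔽 _ ρ.toLinearMap) ∘ₗ
    (LinearMap.llcomp 𝔽 ((V ⊗[𝔽] V) ⊗[𝔽] V) ((V ⊗[𝔽] V) ⊗[𝔽] V) ((V ⊗[𝔽] V) ⊗[𝔽] V)
      ρ.symm.toLinearMap) ∘ₗ
    (LinearMap.rTensorHom V) ∘ₗ β

variable (𝔽 V)

/-- The right action `X •₁ A`, i.e. `(x⊗y⊗z) •₁ (a⊗b) = x⊗(y*a)⊗(b*z)`;
`bAct1R A X = X •₁ A`. -/
noncomputable def bAct1R : V ⊗[𝔽] V →ₗ[𝔽] (V ⊗[𝔽] V) ⊗[𝔽] V →ₗ[𝔽] (V ⊗[𝔽] V) ⊗[𝔽] V :=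
  conjAct (bullet 𝔽 V).flip ((sigma3 𝔽 V).trans (sigma3 𝔽 V))

/-- The left action `A •₂ X`, i.e. `(a⊗b) •₂ (x⊗y⊗z) = (a*x)⊗y⊗(z*b)`. -/
noncomputable def bAct2L : V ⊗[𝔽] V →ₗ[𝔽] (V ⊗[𝔽] V) ⊗[𝔽] V →ₗ[𝔽] (V ⊗[𝔽] V) ⊗[𝔽] V :=
  conjAct (bullet 𝔽 V) (rho2 𝔽 V)

/-- The right action `X •₃ A`, i.e. `(x⊗y⊗z) •₃ (a⊗b) = (x*a)⊗(b*y)⊗z`;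
`bAct3R A X = X •₃ A`. -/
noncomputable def bAct3R : V ⊗[𝔽] V →ₗ[𝔽] (V ⊗[𝔽] V) ⊗[𝔽] V →ₗ[𝔽] (V ⊗[𝔽] V) ⊗[𝔽] V :=
  conjAct (bullet 𝔽 V).flip (LinearEquiv.refl 𝔽 ((V ⊗[𝔽] V) ⊗[𝔽] V))

/-- `a ⋆₁ (x⊗y⊗z) = x⊗(a*y)⊗z`. -/
noncomputable def slot2L (a : V) : (V ⊗[𝔽] V) ⊗[𝔽] V →ₗ[𝔽] (V ⊗[𝔽] V) ⊗[𝔽] V :=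
  LinearMap.rTensor V (LinearMap.lTensor V (LinearMap.mulLeft 𝔽 a))

/-- `(x⊗y⊗z) ⋆₁ b = x⊗(y*b)⊗z`. -/
noncomputable def slot2R (b : V) : (V ⊗[𝔽] V) ⊗[𝔽] V →ₗ[𝔽] (V ⊗[𝔽] V) ⊗[𝔽] V :=
  LinearMap.rTensor V (LinearMap.lTensor V (LinearMap.mulRight 𝔽 b))

/-- `a ⋆₂ (x⊗y⊗z) = x⊗y⊗(a*z)`. -/
noncomputable def slot3L (a : V) : (V ⊗[𝔽] V) ⊗[𝔽] V →ₗ[𝔽] (V ⊗[𝔽] V) ⊗[𝔽] V :=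
  LinearMap.lTensor (V ⊗[𝔽] V) (LinearMap.mulLeft 𝔽 a)

/-- `(x⊗y⊗z) ⋆₂ b = (x*b)⊗y⊗z`. -/
noncomputable def slot1R (b : V) : (V ⊗[𝔽] V) ⊗[𝔽] V →ₗ[𝔽] (V ⊗[𝔽] V) ⊗[𝔽] V :=
  LinearMap.rTensor V (LinearMap.rTensor V (LinearMap.mulRight 𝔽 b))

/-- outer left: `a · (x⊗y⊗z) = (a*x)⊗y⊗z`. -/
noncomputable def slot1L (a : V) : (V ⊗[𝔽] V) ⊗[𝔽] V →ₗ[𝔽] (V ⊗[𝔽] V) ⊗[𝔽] V :=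
  LinearMap.rTensor V (LinearMap.rTensor V (LinearMap.mulLeft 𝔽 a))

/-- outer right: `(x⊗y⊗z) · b = x⊗y⊗(z*b)`. -/
noncomputable def slot3R (b : V) : (V ⊗[𝔽] V) ⊗[𝔽] V →ₗ[𝔽] (V ⊗[𝔽] V) ⊗[𝔽] V :=
  LinearMap.lTensor (V ⊗[𝔽] V) (LinearMap.mulRight 𝔽 b)

variable {𝔽 V}

/-- The triple bracket `{{a,b,c}}`. -/
noncomputable def triple (Br : V →ₗ[𝔽] V →ₗ[𝔽] V ⊗[𝔽] V) (a b c : V) :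
    (V ⊗[𝔽] V) ⊗[𝔽] V :=
  brL Br a (Br b c) + sigma3 𝔽 V (brL Br b (Br c a)) +
    sigma3 𝔽 V (sigma3 𝔽 V (brL Br c (Br a b)))

variable (𝔽 V)

/-- Skewsymmetry of a 2-fold bracket. -/
def IsSkew (Br : V →ₗ[𝔽] V →ₗ[𝔽] V ⊗[𝔽] V) : Prop :=
  ∀ a b : V, Br a b = - swap2 𝔽 V (Br b a)

/-- The span of commutators `[V,V]`. -/
def commSub : Submodule 𝔽 V := Submodule.span 𝔽 {x : V | ∃ a b : V, x = a * b - b * a}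

variable {𝔽 V}

/-- The associated bracket `{a,b} = m {{a,b}}`. -/
noncomputable def sb (Br : V →ₗ[𝔽] V →ₗ[𝔽] V ⊗[𝔽] V) (a b : V) : V :=
  LinearMap.mul' 𝔽 V (Br a b)

/-- A 2-fold derivation: `D(ab) = (Da)·b + a·(Db)`. -/
def Is2Deriv (D : V →ₗ[𝔽] V ⊗[𝔽] V) : Prop :=
  ∀ a b : V, D (a * b) = ract2 𝔽 V b (D a) + lact2 𝔽 V a (D b)

/-- `D` and `E` strongly commute: `D_L ∘ E = E_R ∘ D`. -/
def StronglyComm (D E : V →ₗ[𝔽] V ⊗[𝔽] V) : Prop :=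
  ∀ f : V, LinearMap.rTensor V D (E f) =
    (TensorProduct.assoc 𝔽 V V V).symm (LinearMap.lTensor V E (D f))

end DPA

/-!
For a word `w = x_{k₁} ⋯ x_{kₙ}`, the swapped derivative `(∂w/∂xᵢ)^σ` is the sum of
`w_{>j} ⊗ w_{<j}` over the positions `j` with `kⱼ = i`, so the noncommutative Euler identity
`∑ᵢ xᵢ · m((∂w/∂xᵢ)^σ) = ∑ⱼ x_{kⱼ} w_{>j} w_{<j}` says that the Euler operator sends `w` to the sum
of its cyclic rotations. Let `N` multiply each word by its length and let `P` replace each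
nonempty word by the average of its rotations, fixing `1`; then `N ∘ P` is the Euler operator.
If all `m((∂f/∂xᵢ)^σ)` vanish, then `N (P f) = 0`, so `P f ∈ 𝔽·1` in characteristic `0`, while
`f - P f ∈ [R_ℓ, R_ℓ]` because a word and its rotations agree modulo commutators. Conversely, the
Leibniz rule shows that `m ∘ σ ∘ ∂/∂xᵢ` kills `1` and every commutator.
-/

section TwistedMul

variable {𝔽 V : Type} [Field 𝔽] [Ring V] [Algebra 𝔽 V]

variable (𝔽) in
noncomputable def twistedMul (a : V) : V ⊗[𝔽] V →ₗ[𝔽] V :=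
  mul' 𝔽 V ∘ₗ lTensor V (mulLeft 𝔽 a) ∘ₗ (TensorProduct.comm 𝔽 V V).toLinearMap

@[simp]
lemma twistedMul_tmul (a u v : V) : twistedMul 𝔽 a (u ⊗ₜ v) = v * (a * u) := by
  simp [twistedMul]

lemma twistedMul_one_apply (X : V ⊗[𝔽] V) :
    twistedMul 𝔽 1 X = mul' 𝔽 V (swap2 𝔽 V X) :=
  LinearMap.congr_fun (f := twistedMul 𝔽 1) (g := mul' 𝔽 V ∘ₗ (swap2 𝔽 V).toLinearMap)
    (TensorProduct.ext' fun u v => by simp) X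

lemma twistedMul_ract2 (a c : V) (X : V ⊗[𝔽] V) :
    twistedMul 𝔽 a (ract2 𝔽 V c X) = twistedMul 𝔽 (c * a) X :=
  LinearMap.congr_fun (f := twistedMul 𝔽 a ∘ₗ ract2 𝔽 V c)
    (TensorProduct.ext' fun u v => by simp [ract2, mul_assoc]) X

lemma twistedMul_lact2 (a b : V) (X : V ⊗[𝔽] V) :
    twistedMul 𝔽 a (lact2 𝔽 V b X) = twistedMul 𝔽 (a * b) X :=
  LinearMap.congr_fun (f := twistedMul 𝔽 a ∘ₗ lact2 𝔽 V b)
    (TensorProduct.ext' fun u v => by simp [lact2, mul_assoc]) X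

lemma Is2Deriv.map_one {D : V →ₗ[𝔽] V ⊗[𝔽] V} (hD : Is2Deriv D) : D 1 = 0 := by
  have h := hD 1 1
  simp only [mul_one, ract2, lact2, mulRight_one, mulLeft_one, rTensor_id, lTensor_id,
    id_apply] at h
  simpa using h

lemma Is2Deriv.mul'_swap_map_commutator {D : V →ₗ[𝔽] V ⊗[𝔽] V} (hD : Is2Deriv D) (a b : V) :
    mul' 𝔽 V (swap2 𝔽 V (D (a * b - b * a))) = 0 := by
  rw [← twistedMul_one_apply, map_sub, hD a b, hD b a]
  simp only [map_add, map_sub, twistedMul_ract2, twistedMul_lact2, mul_one, one_mul]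
  abel

lemma Is2Deriv.span_one_sup_commSub_le_ker {D : V →ₗ[𝔽] V ⊗[𝔽] V} (hD : Is2Deriv D) :
    Submodule.span 𝔽 {1} ⊔ commSub 𝔽 V ≤ ker (mul' 𝔽 V ∘ₗ (swap2 𝔽 V).toLinearMap ∘ₗ D) := by
  refine sup_le ?_ ?_
  · rw [Submodule.span_singleton_le_iff_mem, mem_ker]
    simp [hD.map_one]
  · rw [commSub, Submodule.span_le]
    rintro _ ⟨a, b, rfl⟩
    exact hD.mul'_swap_map_commutator a b

end TwistedMul

namespace FreeAlgebra

section Words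

variable {R X : Type*} [CommSemiring R]

variable (R X) in
noncomputable def wordBasis : Module.Basis (List X) R (FreeAlgebra R X) :=
  (basisFreeMonoid R X).reindex FreeMonoid.toList

lemma wordBasis_apply (l : List X) : wordBasis R X l = (l.map (ι R)).prod := by
  rw [wordBasis, Module.Basis.reindex_apply]
  change equivMonoidAlgebraFreeMonoid.symm (MonoidAlgebra.single _ 1) = _
  simp [equivMonoidAlgebraFreeMonoid, FreeMonoid.lift_apply]

@[simp]
lemma wordBasis_nil : wordBasis R X [] = 1 := by
  simp [wordBasis_apply]

@[simp]
lemma wordBasis_cons (x : X) (l : List X) :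
    wordBasis R X (x :: l) = ι R x * wordBasis R X l := by
  simp [wordBasis_apply]

lemma wordBasis_append (l l' : List X) :
    wordBasis R X (l ++ l') = wordBasis R X l * wordBasis R X l' := by
  simp [wordBasis_apply]

noncomputable def lengthScale : FreeAlgebra R X →ₗ[R] FreeAlgebra R X :=
  (wordBasis R X).constr R fun l => (l.length : R) • wordBasis R X l

lemma lengthScale_wordBasis (l : List X) :
    lengthScale (wordBasis R X l) = (l.length : R) • wordBasis R X l :=
  (wordBasis R X).constr_basis R _ l

lemma coord_comp_lengthScale (l : List X) :
    (wordBasis R X).coord l ∘ₗ lengthScale = (l.length : R) • (wordBasis R X).coord l := by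
  refine (wordBasis R X).ext fun l' => ?_
  simp only [comp_apply, lengthScale_wordBasis, map_smul, LinearMap.smul_apply,
    Module.Basis.coord_apply, Module.Basis.repr_self, smul_eq_mul]
  rcases eq_or_ne l' l with rfl | h
  · rfl
  · simp [Finsupp.single_eq_of_ne h.symm]

end Words

variable {𝔽 X : Type} [Field 𝔽]

lemma wordBasis_sub_wordBasis_rotate_mem_commSub (l : List X) (n : ℕ) :
    wordBasis 𝔽 X l - wordBasis 𝔽 X (l.rotate n) ∈ commSub 𝔽 (FreeAlgebra 𝔽 X) := by
  have hsplit := congrArg (wordBasis 𝔽 X) (List.take_append_drop (n % l.length) l)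
  rw [wordBasis_append] at hsplit
  rw [List.rotate_eq_drop_append_take_mod, wordBasis_append, ← hsplit]
  exact Submodule.subset_span ⟨_, _, rfl⟩

section Euler

variable [Fintype X] (D : X → (FreeAlgebra 𝔽 X →ₗ[𝔽] FreeAlgebra 𝔽 X ⊗[𝔽] FreeAlgebra 𝔽 X))

-- The twist `a` generalizes the Euler operator (`a = 1`) so that induction over words goes through.
noncomputable def twistedEuler (a : FreeAlgebra 𝔽 X) : FreeAlgebra 𝔽 X →ₗ[𝔽] FreeAlgebra 𝔽 X :=
  ∑ i, mulLeft 𝔽 (ι 𝔽 i) ∘ₗ twistedMul 𝔽 a ∘ₗ D i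

variable {D}

lemma twistedEuler_one_apply (a : FreeAlgebra 𝔽 X) (hD : ∀ i, Is2Deriv (D i)) :
    twistedEuler D a 1 = 0 := by
  simp [twistedEuler, (hD _).map_one]

lemma twistedEuler_ι_mul [DecidableEq X] (hD : ∀ i, Is2Deriv (D i))
    (hgen : ∀ i k, D i (ι 𝔽 k) = if i = k then 1 ⊗ₜ 1 else 0) (a g : FreeAlgebra 𝔽 X) (k : X) :
    twistedEuler D a (ι 𝔽 k * g) = ι 𝔽 k * (g * a) + twistedEuler D (a * ι 𝔽 k) g := by
  have hterm : ∀ i, twistedMul 𝔽 a (D i (ι 𝔽 k * g)) =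
      (if i = k then g * a else 0) + twistedMul 𝔽 (a * ι 𝔽 k) (D i g) := by
    intro i
    rw [hD i, map_add, twistedMul_ract2, twistedMul_lact2, hgen]
    split_ifs <;> simp
  simp [twistedEuler, hterm, mul_add, Finset.sum_add_distrib]

lemma twistedEuler_wordBasis [DecidableEq X] (hD : ∀ i, Is2Deriv (D i))
    (hgen : ∀ i k, D i (ι 𝔽 k) = if i = k then 1 ⊗ₜ 1 else 0) (l : List X) (a : FreeAlgebra 𝔽 X) :
    twistedEuler D a (wordBasis 𝔽 X l) =
      ∑ j ∈ Finset.range l.length, wordBasis 𝔽 X (l.drop j) * a * wordBasis 𝔽 X (l.take j) := by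
  induction l generalizing a with
  | nil => simp [twistedEuler_one_apply a hD]
  | cons k t ih =>
    rw [wordBasis_cons, twistedEuler_ι_mul hD hgen, ih, List.length_cons, Finset.sum_range_succ',
      add_comm]
    simp [mul_assoc]

lemma twistedEuler_one_wordBasis [DecidableEq X] (hD : ∀ i, Is2Deriv (D i))
    (hgen : ∀ i k, D i (ι 𝔽 k) = if i = k then 1 ⊗ₜ 1 else 0) (l : List X) :
    twistedEuler D 1 (wordBasis 𝔽 X l) =
      ∑ j ∈ Finset.range l.length, wordBasis 𝔽 X (l.rotate j) := by
  rw [twistedEuler_wordBasis hD hgen]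
  refine Finset.sum_congr rfl fun j hj => ?_
  rw [List.rotate_eq_drop_append_take (Finset.mem_range.mp hj).le, wordBasis_append, mul_one]

end Euler

lemma mem_span_one_of_lengthScale_eq_zero [CharZero 𝔽] {f : FreeAlgebra 𝔽 X}
    (hf : lengthScale f = 0) : f ∈ Submodule.span 𝔽 {1} := by
  have hcoord : ∀ l ≠ [], (wordBasis 𝔽 X).repr f l = 0 := by
    intro l hl
    have h := LinearMap.congr_fun (coord_comp_lengthScale (R := 𝔽) l) f
    simp only [comp_apply, hf, map_zero, LinearMap.smul_apply, Module.Basis.coord_apply,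
      smul_eq_mul] at h
    exact (mul_eq_zero.mp h.symm).resolve_left (by simpa using hl)
  have hrepr : (wordBasis 𝔽 X).repr f = Finsupp.single [] ((wordBasis 𝔽 X).repr f []) := by
    ext l
    by_cases hl : l = []
    · simp [hl]
    · simp [Ne.symm hl, hcoord l hl]
  rw [← (wordBasis 𝔽 X).linearCombination_repr f, hrepr, Finsupp.linearCombination_single,
    wordBasis_nil]
  exact Submodule.smul_mem _ _ (Submodule.mem_span_singleton_self 1)

noncomputable def cyclicAverage : FreeAlgebra 𝔽 X →ₗ[𝔽] FreeAlgebra 𝔽 X :=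
  (wordBasis 𝔽 X).constr 𝔽 fun l =>
    if l = [] then 1
    else (l.length : 𝔽)⁻¹ • ∑ j ∈ Finset.range l.length, wordBasis 𝔽 X (l.rotate j)

lemma cyclicAverage_one : cyclicAverage (1 : FreeAlgebra 𝔽 X) = 1 := by
  rw [← wordBasis_nil, cyclicAverage, Module.Basis.constr_basis, if_pos rfl, wordBasis_nil]

lemma cyclicAverage_wordBasis_of_ne_nil {l : List X} (hl : l ≠ []) :
    cyclicAverage (wordBasis 𝔽 X l) =
      (l.length : 𝔽)⁻¹ • ∑ j ∈ Finset.range l.length, wordBasis 𝔽 X (l.rotate j) := by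
  rw [cyclicAverage, Module.Basis.constr_basis, if_neg hl]

lemma lengthScale_comp_cyclicAverage [CharZero 𝔽] [Fintype X] [DecidableEq X]
    {D : X → (FreeAlgebra 𝔽 X →ₗ[𝔽] FreeAlgebra 𝔽 X ⊗[𝔽] FreeAlgebra 𝔽 X)}
    (hD : ∀ i, Is2Deriv (D i)) (hgen : ∀ i k, D i (ι 𝔽 k) = if i = k then 1 ⊗ₜ 1 else 0) :
    lengthScale ∘ₗ cyclicAverage = twistedEuler D 1 := by
  refine (wordBasis 𝔽 X).ext fun l => ?_
  rw [comp_apply, twistedEuler_one_wordBasis hD hgen]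
  rcases eq_or_ne l [] with rfl | hl
  · simpa [cyclicAverage_one] using lengthScale_wordBasis (R := 𝔽) ([] : List X)
  · have hlen : (l.length : 𝔽) ≠ 0 := by simpa using hl
    simp [cyclicAverage_wordBasis_of_ne_nil hl, map_sum, lengthScale_wordBasis, smul_smul,
      ← Finset.smul_sum, hlen]

lemma wordBasis_sub_cyclicAverage_mem_commSub [CharZero 𝔽] (l : List X) :
    wordBasis 𝔽 X l - cyclicAverage (wordBasis 𝔽 X l) ∈ commSub 𝔽 (FreeAlgebra 𝔽 X) := by
  rcases eq_or_ne l [] with rfl | hl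
  · simp [cyclicAverage_one]
  have hlen : (l.length : 𝔽) ≠ 0 := by simpa using hl
  have h : wordBasis 𝔽 X l - cyclicAverage (wordBasis 𝔽 X l) = (l.length : 𝔽)⁻¹ •
      ∑ j ∈ Finset.range l.length, (wordBasis 𝔽 X l - wordBasis 𝔽 X (l.rotate j)) := by
    rw [cyclicAverage_wordBasis_of_ne_nil hl, Finset.sum_sub_distrib, Finset.sum_const,
      Finset.card_range, smul_sub, ← Nat.cast_smul_eq_nsmul 𝔽, smul_smul, inv_mul_cancel₀ hlen,
      one_smul]
  rw [h]
  exact Submodule.smul_mem _ _ (Submodule.sum_mem _ fun j _ =>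
    wordBasis_sub_wordBasis_rotate_mem_commSub l j)

lemma sub_cyclicAverage_mem_commSub [CharZero 𝔽] (f : FreeAlgebra 𝔽 X) :
    f - cyclicAverage f ∈ commSub 𝔽 (FreeAlgebra 𝔽 X) := by
  have h : (⊤ : Submodule 𝔽 (FreeAlgebra 𝔽 X)).map (LinearMap.id - cyclicAverage) ≤
      commSub 𝔽 (FreeAlgebra 𝔽 X) := by
    rw [← (wordBasis 𝔽 X).span_eq, Submodule.map_span_le]
    rintro _ ⟨l, rfl⟩
    exact wordBasis_sub_cyclicAverage_mem_commSub l
  exact h ⟨f, trivial, rfl⟩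

end FreeAlgebra

/-- on the free algebra `R_ℓ`, `m((∂f/∂x_i)^σ) = 0` for all `i`
iff `f ∈ 𝔽·1 + [R_ℓ, R_ℓ]`. -/
theorem statement_16 (𝔽 : Type) [Field 𝔽] [CharZero 𝔽] (ℓ : ℕ)
    (D : Fin ℓ → (FreeAlgebra 𝔽 (Fin ℓ) →ₗ[𝔽] FreeAlgebra 𝔽 (Fin ℓ) ⊗[𝔽] FreeAlgebra 𝔽 (Fin ℓ)))
    (hD : ∀ i, Is2Deriv (D i))
    (hgen : ∀ i k, D i (FreeAlgebra.ι 𝔽 k) =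
      if i = k then (1 : FreeAlgebra 𝔽 (Fin ℓ)) ⊗ₜ[𝔽] (1 : FreeAlgebra 𝔽 (Fin ℓ)) else 0)
    (f : FreeAlgebra 𝔽 (Fin ℓ)) :
    (∀ i, LinearMap.mul' 𝔽 (FreeAlgebra 𝔽 (Fin ℓ)) (swap2 𝔽 (FreeAlgebra 𝔽 (Fin ℓ)) (D i f)) = 0)
      ↔ f ∈ Submodule.span 𝔽 {(1 : FreeAlgebra 𝔽 (Fin ℓ))} ⊔ commSub 𝔽 (FreeAlgebra 𝔽 (Fin ℓ)) := by
  refine ⟨fun h => ?_, fun hf i => (hD i).span_one_sup_commSub_le_ker hf⟩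
  have hEuler : FreeAlgebra.twistedEuler D 1 f = 0 := by
    simp [FreeAlgebra.twistedEuler, twistedMul_one_apply, h]
  have hAverage : FreeAlgebra.cyclicAverage f ∈ Submodule.span 𝔽 {1} := by
    refine FreeAlgebra.mem_span_one_of_lengthScale_eq_zero ?_
    rw [← LinearMap.comp_apply, FreeAlgebra.lengthScale_comp_cyclicAverage hD hgen, hEuler]
  simpa using Submodule.add_mem_sup hAverage (FreeAlgebra.sub_cyclicAverage_mem_commSub f)
end

section
/- Let (V, ∂, {{−_λ−}}) be a double Poisson vertex algebra. For a,b ∈ V define {a,b} := m({{a_λ b}}|_{λ=0}) ∈ V, the image under the multiplication map m : V⊗V → V of the value of the polynomial {{a_λ b}} at λ = 0. Then for all a,b,c ∈ V: (i) {∂a, b} = 0 and {ab, c} = {ba, c}; (ii) {a, ∂b} = ∂{a,b} and {a, bc} = {a,b}c + b{a,c}; (iii) {a,b} + {b,a} ∈ [V,V] + ∂V; (iv) {a,{b,c}} − {b,{a,c}} = {{a,b}, c}. Consequently, V/([V,V] + ∂V) is a Lie algebra over 𝔽 with the bracket induced by {−,−}, and it acts on V by derivations of V commuting with ∂. -/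
open TensorProduct LinearMap

section DPA

variable (𝔽 : Type) [Field 𝔽] (V : Type) [Ring V] [Algebra 𝔽 V]

variable {𝔽 V}

variable (𝔽 V)

variable {𝔽 V}

variable (𝔽 V)

variable {𝔽 V}

variable (𝔽 V)

variable {𝔽 V}

section PVA

variable (𝔽 : Type) [Field 𝔽] (V : Type) [Ring V] [Algebra 𝔽 V]

/- We encode a polynomial `Σ_n C_n λ^n` with coefficients `C_n ∈ V ⊗ V` as the
finitely supported function `ℕ →₀ V ⊗ V`, and a two-variable polynomial in `λ, μ`
with coefficients in `V⊗V⊗V` as `(ℕ × ℕ) →₀ (V⊗V)⊗V`. -/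

/-- Multiplication by `λ`: shift all degrees up by one. -/
noncomputable def lamMul : (ℕ →₀ V ⊗[𝔽] V) →ₗ[𝔽] (ℕ →₀ V ⊗[𝔽] V) :=
  Finsupp.lmapDomain _ 𝔽 (· + 1)

/-- The action of `∂` on `V ⊗ V`: `∂(u⊗v) = (∂u)⊗v + u⊗(∂v)`. -/
noncomputable def d2 (pd : V →ₗ[𝔽] V) : V ⊗[𝔽] V →ₗ[𝔽] V ⊗[𝔽] V :=
  LinearMap.rTensor V pd + LinearMap.lTensor V pd

/-- Coefficientwise application of a linear map to a polynomial. -/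
noncomputable def cw (φ : V ⊗[𝔽] V →ₗ[𝔽] V ⊗[𝔽] V) :
    (ℕ →₀ V ⊗[𝔽] V) →ₗ[𝔽] (ℕ →₀ V ⊗[𝔽] V) :=
  Finsupp.mapRange.linearMap φ

/-- `P(λ+∂)_→ ⋆₁ b`: for `P = Σ_n C_n λ^n`, this is
`Σ_n Σ_{j≤n} C(n,j) (C_n ⋆₁ ∂ʲb) λ^{n−j}`. -/
noncomputable def lamShiftR (pd : V →ₗ[𝔽] V) (P : ℕ →₀ V ⊗[𝔽] V) (b : V) :
    ℕ →₀ V ⊗[𝔽] V :=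
  P.sum fun n A => ∑ j ∈ Finset.range (n + 1),
    (n.choose j : 𝔽) • Finsupp.single (n - j)
      (star1r 𝔽 V (((pd : Module.End 𝔽 V) ^ j) b) A)

/-- `(e^{∂∂_λ} a) ⋆₁ P`: for `P = Σ_n C_n λ^n`, this is
`Σ_n Σ_{j≤n} C(n,j) ((∂ʲa) ⋆₁ C_n) λ^{n−j}`. -/
noncomputable def lamShiftL (pd : V →ₗ[𝔽] V) (P : ℕ →₀ V ⊗[𝔽] V) (a : V) :
    ℕ →₀ V ⊗[𝔽] V :=
  P.sum fun n A => ∑ j ∈ Finset.range (n + 1),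
    (n.choose j : 𝔽) • Finsupp.single (n - j)
      (star1l 𝔽 V (((pd : Module.End 𝔽 V) ^ j) a) A)

/-- The right-hand side `−{{b_{−λ−∂} a}}^σ` of the skewsymmetry axiom: for
`P = {{b_λ a}} = Σ_n C′_n λ^n`, this is
`−Σ_n Σ_{j≤n} C(n,j) (−1)^n λ^{n−j} (∂ʲ C′_n)^σ`. -/
noncomputable def skewRHS (pd : V →ₗ[𝔽] V) (P : ℕ →₀ V ⊗[𝔽] V) : ℕ →₀ V ⊗[𝔽] V :=
  - P.sum fun n A => ∑ j ∈ Finset.range (n + 1),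
      (((-1 : 𝔽) ^ n) * (n.choose j : 𝔽)) •
        Finsupp.single (n - j)
          (swap2 𝔽 V (((d2 𝔽 V pd : Module.End 𝔽 (V ⊗[𝔽] V)) ^ j) A))

/-- Auxiliary map for `{{a_λ (u⊗v)}}_L`: `(E, v) ↦ (E ⊗ v)` placed in bidegree `(n,m)`. -/
noncomputable def kappaL (n m : ℕ) :
    (V ⊗[𝔽] V) →ₗ[𝔽] (V →ₗ[𝔽] ((ℕ × ℕ) →₀ (V ⊗[𝔽] V) ⊗[𝔽] V)) :=
  (LinearMap.llcomp 𝔽 V ((V ⊗[𝔽] V) ⊗[𝔽] V) ((ℕ × ℕ) →₀ (V ⊗[𝔽] V) ⊗[𝔽] V)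
    (Finsupp.lsingle (n, m))) ∘ₗ (TensorProduct.mk 𝔽 (V ⊗[𝔽] V) V)

/-- `{{a_λ {{b_μ c}} }}_L ∈ V^{⊗3}[λ,μ]`. -/
noncomputable def jacL (Br : V →ₗ[𝔽] V →ₗ[𝔽] (ℕ →₀ V ⊗[𝔽] V)) (a b c : V) :
    (ℕ × ℕ) →₀ (V ⊗[𝔽] V) ⊗[𝔽] V :=
  (Br b c).sum fun m P =>
    TensorProduct.lift ((Finsupp.lsum 𝔽 (fun n => kappaL 𝔽 V n m)) ∘ₗ (Br a)) P

/-- Auxiliary map for `{{b_μ (u⊗v)}}_R`: `(D, u) ↦ u ⊗ D` (re-associated) placed in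
bidegree `(n,m)`. -/
noncomputable def nuR (n m : ℕ) :
    (V ⊗[𝔽] V) →ₗ[𝔽] (V →ₗ[𝔽] ((ℕ × ℕ) →₀ (V ⊗[𝔽] V) ⊗[𝔽] V)) :=
  (LinearMap.llcomp 𝔽 V (V ⊗[𝔽] (V ⊗[𝔽] V)) ((ℕ × ℕ) →₀ (V ⊗[𝔽] V) ⊗[𝔽] V)
    ((Finsupp.lsingle (n, m)) ∘ₗ (TensorProduct.assoc 𝔽 V V V).symm.toLinearMap)) ∘ₗ
    (TensorProduct.mk 𝔽 V (V ⊗[𝔽] V)).flip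

/-- `{{b_μ {{a_λ c}} }}_R ∈ V^{⊗3}[λ,μ]`. -/
noncomputable def jacR (Br : V →ₗ[𝔽] V →ₗ[𝔽] (ℕ →₀ V ⊗[𝔽] V)) (b a c : V) :
    (ℕ × ℕ) →₀ (V ⊗[𝔽] V) ⊗[𝔽] V :=
  (Br a c).sum fun n P =>
    TensorProduct.lift (((Finsupp.lsum 𝔽 (fun m => nuR 𝔽 V n m)) ∘ₗ (Br b)).flip) P

/-- `(E, w) ↦ E ⊗₁ w`, i.e. `(u⊗v) ⊗₁ w = u⊗w⊗v`, bundled with `w` first. -/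
noncomputable def otimes1b : V →ₗ[𝔽] (V ⊗[𝔽] V) →ₗ[𝔽] (V ⊗[𝔽] V) ⊗[𝔽] V :=
  (LinearMap.llcomp 𝔽 (V ⊗[𝔽] V) ((V ⊗[𝔽] V) ⊗[𝔽] V) ((V ⊗[𝔽] V) ⊗[𝔽] V)
    (rho2 𝔽 V).toLinearMap) ∘ₗ (TensorProduct.mk 𝔽 (V ⊗[𝔽] V) V).flip

/-- Auxiliary map for `{{Q_{λ+μ} c}}_L`: for `E = E_k` (a coefficient of `{{Q_n′ _ν c}}`)
and `v = Q_n″`, produce `Σ_{j≤k} Σ_{s≤k−j} C(k,j) C(k−j,s) (E ⊗₁ ∂ʲv)` in bidegree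
`(n+s, k−j−s)` (expansion of `λ^n (λ+μ)^{k−j}`). -/
noncomputable def gammaC (pd : V →ₗ[𝔽] V) (n k : ℕ) :
    (V ⊗[𝔽] V) →ₗ[𝔽] (V →ₗ[𝔽] ((ℕ × ℕ) →₀ (V ⊗[𝔽] V) ⊗[𝔽] V)) :=
  ∑ j ∈ Finset.range (k + 1), ∑ s ∈ Finset.range (k - j + 1),
    ((k.choose j : 𝔽) * ((k - j).choose s : 𝔽)) •
      ((LinearMap.lcomp 𝔽 ((ℕ × ℕ) →₀ (V ⊗[𝔽] V) ⊗[𝔽] V) ((pd : Module.End 𝔽 V) ^ j)) ∘ₗ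
        (LinearMap.llcomp 𝔽 V ((V ⊗[𝔽] V) ⊗[𝔽] V) ((ℕ × ℕ) →₀ (V ⊗[𝔽] V) ⊗[𝔽] V)
          (Finsupp.lsingle (n + s, k - j - s))) ∘ₗ (otimes1b 𝔽 V).flip)

/-- `{{Q_{λ+μ} c}}_L ∈ V^{⊗3}[λ,μ]` for a polynomial `Q = Σ_n Q_n λ^n`. -/
noncomputable def jacC (pd : V →ₗ[𝔽] V) (Br : V →ₗ[𝔽] V →ₗ[𝔽] (ℕ →₀ V ⊗[𝔽] V))
    (c : V) (Q : ℕ →₀ V ⊗[𝔽] V) : (ℕ × ℕ) →₀ (V ⊗[𝔽] V) ⊗[𝔽] V :=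
  Q.sum fun n Qn =>
    TensorProduct.lift ((Finsupp.lsum 𝔽 (fun k => gammaC 𝔽 V pd n k)) ∘ₗ (Br.flip c)) Qn

/-- The bracket `{a,b} := m ({{a_λ b}}|_{λ=0})`, i.e. the multiplication applied to
the constant coefficient. -/
noncomputable def sbP (Br : V →ₗ[𝔽] V →ₗ[𝔽] (ℕ →₀ V ⊗[𝔽] V)) (a b : V) : V :=
  LinearMap.mul' 𝔽 V ((Br a b) 0)

end PVA



/-! Everything happens at `λ = 0` (and `λ = μ = 0` for the Jacobi identity), after applying the
multiplication `m`. Sesquilinearity and the Leibniz rules then give (i) and (ii) directly. At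
`λ = 0` skewsymmetry reads `{{a_0 b}}^σ = -Σₙ (-1)ⁿ ∂ⁿ C′ₙ`; since `m ∘ σ = m` modulo `[V,V]` and
`m ∘ ∂ = ∂ ∘ m`, this gives (iii). For (iv), the constant coefficient of the Jacobi identity
expresses `{a,{b,c}} - {b,{a,c}}` through `T({{a_0 b}})`, where `T(u ⊗ v) = Σₖ m(Eₖ ⋆₁ ∂ᵏv)` for
`{{u_λ c}} = Σₖ Eₖ λᵏ`; the right Leibniz rule gives `{{a,b},c} = T(X) + T(X^σ)` with
`X = {{a_0 b}}`, and `T` kills `∂(V ⊗ V)` by sesquilinearity, so skewsymmetry turns `T(X^σ)` into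
`-T({{b_0 a}})`. The Lie algebra and its action on `V` are then obtained by descending `{-,-}` to
the quotient by `[V,V] + ∂V`. -/

section DoublePoissonVertexAlgebra

variable {𝔽 : Type} [Field 𝔽] {V : Type} [Ring V] [Algebra 𝔽 V]

theorem mul'_ract2 (c : V) (X : V ⊗[𝔽] V) :
    mul' 𝔽 V (ract2 𝔽 V c X) = mul' 𝔽 V X * c := by
  induction X using TensorProduct.induction_on with
  | zero => simp
  | tmul u v => simp [ract2, mul_assoc]
  | add X Y hX hY => simp only [map_add, hX, hY, add_mul]

theorem mul'_lact2 (b : V) (X : V ⊗[𝔽] V) :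
    mul' 𝔽 V (lact2 𝔽 V b X) = b * mul' 𝔽 V X := by
  induction X using TensorProduct.induction_on with
  | zero => simp
  | tmul u v => simp [lact2, mul_assoc]
  | add X Y hX hY => simp only [map_add, hX, hY, mul_add]

theorem mul'_d2 {pd : V →ₗ[𝔽] V} (hpd : ∀ a b : V, pd (a * b) = pd a * b + a * pd b)
    (X : V ⊗[𝔽] V) : mul' 𝔽 V (d2 𝔽 V pd X) = pd (mul' 𝔽 V X) := by
  induction X using TensorProduct.induction_on with
  | zero => simp
  | tmul u v => simp [d2, hpd]
  | add X Y hX hY => simp only [map_add, hX, hY]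

theorem swap2_d2 (pd : V →ₗ[𝔽] V) (X : V ⊗[𝔽] V) :
    swap2 𝔽 V (d2 𝔽 V pd X) = d2 𝔽 V pd (swap2 𝔽 V X) := by
  induction X using TensorProduct.induction_on with
  | zero => simp
  | tmul u v => simp [d2, add_comm]
  | add X Y hX hY => simp only [map_add, hX, hY]

theorem mul'_swap2_sub_mem_commSub (X : V ⊗[𝔽] V) :
    mul' 𝔽 V (swap2 𝔽 V X) - mul' 𝔽 V X ∈ commSub 𝔽 V := by
  induction X using TensorProduct.induction_on with
  | zero => simp
  | tmul u v => exact Submodule.subset_span ⟨v, u, by simp⟩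
  | add X Y hX hY => simpa only [map_add, add_sub_add_comm] using add_mem hX hY

variable (𝔽 V) in
noncomputable def insertMul : V ⊗[𝔽] V →ₗ[𝔽] V →ₗ[𝔽] V :=
  TensorProduct.lift
    ((LinearMap.llcomp 𝔽 V V V ∘ₗ LinearMap.mul 𝔽 V).compl₂ (LinearMap.mul 𝔽 V).flip)

@[simp]
theorem insertMul_tmul (u v x : V) : insertMul 𝔽 V (u ⊗ₜ v) x = u * x * v := by
  simp [insertMul, mul_assoc]

theorem mul'_star1r (x : V) (A : V ⊗[𝔽] V) : mul' 𝔽 V (star1r 𝔽 V x A) = insertMul 𝔽 V A x := by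
  induction A using TensorProduct.induction_on with
  | zero => simp
  | tmul u v => simp [star1r]
  | add X Y hX hY => simp only [map_add, hX, hY, LinearMap.add_apply]

theorem mul'_star1l (x : V) (A : V ⊗[𝔽] V) : mul' 𝔽 V (star1l 𝔽 V x A) = insertMul 𝔽 V A x := by
  induction A using TensorProduct.induction_on with
  | zero => simp
  | tmul u v => simp [star1l, mul_assoc]
  | add X Y hX hY => simp only [map_add, hX, hY, LinearMap.add_apply]

theorem lamMul_apply_zero (P : ℕ →₀ V ⊗[𝔽] V) : lamMul 𝔽 V P 0 = 0 := by
  rw [lamMul, Finsupp.lmapDomain_apply]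
  exact Finsupp.mapDomain_of_notMem_range _ _ (by simp)

theorem cw_apply (φ : V ⊗[𝔽] V →ₗ[𝔽] V ⊗[𝔽] V) (P : ℕ →₀ V ⊗[𝔽] V) (n : ℕ) :
    cw 𝔽 V φ P n = φ (P n) := rfl

theorem Finsupp.sum_range_single_sub_apply_zero {M : Type} [AddCommMonoid M]
    (n : ℕ) (X : ℕ → M) :
    (∑ j ∈ Finset.range (n + 1), Finsupp.single (n - j) (X j)) 0 = X n := by
  rw [Finsupp.finsetSum_apply, Finset.sum_eq_single_of_mem n (Finset.self_mem_range_succ n)]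
  · simp
  · intro j hj hjn
    have : n - j ≠ 0 := by have := Finset.mem_range.mp hj; omega
    simp [this]

theorem lamShiftR_apply_zero (pd : V →ₗ[𝔽] V) (P : ℕ →₀ V ⊗[𝔽] V) (b : V) :
    lamShiftR 𝔽 V pd P b 0 = P.sum fun n A => star1r 𝔽 V (((pd : Module.End 𝔽 V) ^ n) b) A := by
  rw [lamShiftR, Finsupp.sum_apply]
  refine Finsupp.sum_congr fun n _ => ?_
  simp [Finsupp.sum_range_single_sub_apply_zero]

theorem lamShiftL_apply_zero (pd : V →ₗ[𝔽] V) (P : ℕ →₀ V ⊗[𝔽] V) (a : V) :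
    lamShiftL 𝔽 V pd P a 0 = P.sum fun n A => star1l 𝔽 V (((pd : Module.End 𝔽 V) ^ n) a) A := by
  rw [lamShiftL, Finsupp.sum_apply]
  refine Finsupp.sum_congr fun n _ => ?_
  simp [Finsupp.sum_range_single_sub_apply_zero]

theorem skewRHS_apply_zero (pd : V →ₗ[𝔽] V) (P : ℕ →₀ V ⊗[𝔽] V) :
    skewRHS 𝔽 V pd P 0 = -P.sum fun n A =>
      ((-1 : 𝔽) ^ n) • swap2 𝔽 V (((d2 𝔽 V pd : Module.End 𝔽 (V ⊗[𝔽] V)) ^ n) A) := by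
  rw [skewRHS, Finsupp.neg_apply, Finsupp.sum_apply]
  congr 1
  refine Finsupp.sum_congr fun n _ => ?_
  simp [Finsupp.sum_range_single_sub_apply_zero]

section Bracket

variable (pd : V →ₗ[𝔽] V) (Br : V →ₗ[𝔽] V →ₗ[𝔽] (ℕ →₀ V ⊗[𝔽] V))

variable (𝔽 V) in
/-- `Σₙ Pₙ (∂ⁿ x)`, the constant coefficient of `m (P(λ+∂) ⋆₁ x)`, for `P = Σₙ Pₙ λⁿ`. -/
noncomputable def evalDeriv : (ℕ →₀ V ⊗[𝔽] V) →ₗ[𝔽] V →ₗ[𝔽] V :=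
  Finsupp.lsum 𝔽 fun n => (insertMul 𝔽 V).compl₂ ((pd : Module.End 𝔽 V) ^ n)

theorem evalDeriv_apply (P : ℕ →₀ V ⊗[𝔽] V) (x : V) :
    evalDeriv 𝔽 V pd P x = P.sum fun n A => insertMul 𝔽 V A (((pd : Module.End 𝔽 V) ^ n) x) := by
  simp [evalDeriv]

theorem evalDeriv_lamMul (P : ℕ →₀ V ⊗[𝔽] V) (x : V) :
    evalDeriv 𝔽 V pd (lamMul 𝔽 V P) x = evalDeriv 𝔽 V pd P (pd x) := by
  rw [lamMul, Finsupp.lmapDomain_apply, evalDeriv_apply, evalDeriv_apply,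
    Finsupp.sum_mapDomain_index (by simp) (by simp)]
  simp [pow_succ]

theorem sbP_pd_left (hsesq1 : ∀ a b : V, Br (pd a) b = - lamMul 𝔽 V (Br a b)) (a b : V) :
    sbP 𝔽 V Br (pd a) b = 0 := by
  rw [sbP, hsesq1, Finsupp.neg_apply, lamMul_apply_zero, neg_zero, map_zero]

theorem sbP_mul_left
    (hright : ∀ a b c : V,
      Br (a * b) c = lamShiftR 𝔽 V pd (Br a c) b + lamShiftL 𝔽 V pd (Br b c) a)
    (a b c : V) :
    sbP 𝔽 V Br (a * b) c = evalDeriv 𝔽 V pd (Br a c) b + evalDeriv 𝔽 V pd (Br b c) a := by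
  simp [sbP, hright, lamShiftR_apply_zero, lamShiftL_apply_zero, map_finsuppSum,
    mul'_star1r, mul'_star1l, evalDeriv_apply]

theorem sbP_mul_left_comm
    (hright : ∀ a b c : V,
      Br (a * b) c = lamShiftR 𝔽 V pd (Br a c) b + lamShiftL 𝔽 V pd (Br b c) a)
    (a b c : V) :
    sbP 𝔽 V Br (a * b) c = sbP 𝔽 V Br (b * a) c := by
  rw [sbP_mul_left pd Br hright, sbP_mul_left pd Br hright, add_comm]

theorem sbP_pd_right {pd : V →ₗ[𝔽] V} (hpd : ∀ a b : V, pd (a * b) = pd a * b + a * pd b)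
    (hsesq2 : ∀ a b : V,
      Br a (pd b) = lamMul 𝔽 V (Br a b) + cw 𝔽 V (d2 𝔽 V pd) (Br a b))
    (a b : V) :
    sbP 𝔽 V Br a (pd b) = pd (sbP 𝔽 V Br a b) := by
  rw [sbP, hsesq2, Finsupp.add_apply, lamMul_apply_zero, cw_apply, zero_add, mul'_d2 hpd, sbP]

theorem sbP_mul_right
    (hleft : ∀ a b c : V,
      Br a (b * c) = cw 𝔽 V (ract2 𝔽 V c) (Br a b) + cw 𝔽 V (lact2 𝔽 V b) (Br a c))
    (a b c : V) :
    sbP 𝔽 V Br a (b * c) = sbP 𝔽 V Br a b * c + b * sbP 𝔽 V Br a c := by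
  rw [sbP, sbP, sbP, hleft, Finsupp.add_apply, cw_apply, cw_apply, map_add,
    mul'_ract2, mul'_lact2]

theorem apply_swap2_apply_zero_of_skew {M : Type} [AddCommGroup M] [Module 𝔽 M]
    (hskew : ∀ a b : V, Br a b = skewRHS 𝔽 V pd (Br b a))
    (φ : V ⊗[𝔽] V →ₗ[𝔽] M) (hφ : ∀ X, φ (d2 𝔽 V pd X) = 0) (a b : V) :
    φ (swap2 𝔽 V (Br a b 0)) = -φ (Br b a 0) := by
  rw [hskew, skewRHS_apply_zero, map_neg, map_neg, map_finsuppSum, map_finsuppSum,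
    Finsupp.sum_eq_single 0]
  · simp
  · intro n _ hn
    obtain ⟨k, rfl⟩ := Nat.exists_eq_succ_of_ne_zero hn
    simp [pow_succ', hφ]
  · simp

theorem sbP_add_sbP_swap_mem {pd : V →ₗ[𝔽] V} (hpd : ∀ a b : V, pd (a * b) = pd a * b + a * pd b)
    (hskew : ∀ a b : V, Br a b = skewRHS 𝔽 V pd (Br b a)) (a b : V) :
    sbP 𝔽 V Br a b + sbP 𝔽 V Br b a ∈ commSub 𝔽 V ⊔ LinearMap.range pd := by
  set S := commSub 𝔽 V ⊔ LinearMap.range pd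
  let q : V ⊗[𝔽] V →ₗ[𝔽] V ⧸ S := S.mkQ ∘ₗ mul' 𝔽 V
  have hq_d2 (X : V ⊗[𝔽] V) : q (d2 𝔽 V pd X) = 0 := by
    simpa [q, mul'_d2 hpd] using Submodule.mem_sup_right (LinearMap.mem_range_self pd _)
  have hq_swap2 (X : V ⊗[𝔽] V) : q (swap2 𝔽 V X) = q X := by
    simpa [q, Submodule.Quotient.eq] using
      Submodule.mem_sup_left (S := commSub 𝔽 V) (mul'_swap2_sub_mem_commSub X)
  have := apply_swap2_apply_zero_of_skew pd Br hskew q hq_d2 a b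
  rw [hq_swap2] at this
  rw [← Submodule.Quotient.mk_eq_zero, Submodule.Quotient.mk_add]
  exact add_eq_zero_iff_eq_neg.mpr this

noncomputable def constCoeff : V →ₗ[𝔽] V →ₗ[𝔽] V ⊗[𝔽] V := Br.compr₂ (Finsupp.lapply 0)

noncomputable def sbLin : V →ₗ[𝔽] V →ₗ[𝔽] V := (constCoeff Br).compr₂ (mul' 𝔽 V)

theorem sbLin_apply (a b : V) : sbLin Br a b = sbP 𝔽 V Br a b := rfl

theorem jacL_apply_zero (a b c : V) :
    jacL 𝔽 V Br a b c (0, 0) = rTensor V (constCoeff Br a) (Br b c 0) := by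
  rw [jacL, Finsupp.sum_apply, Finsupp.sum_eq_single 0 _ (by simp)]
  · induction Br b c 0 using TensorProduct.induction_on with
    | zero => simp
    | tmul u v =>
      simp +contextual [kappaL, Finsupp.sum_apply, Finsupp.single_apply, Prod.ext_iff, constCoeff]
    | add X Y hX hY => simp only [map_add, Finsupp.add_apply, hX, hY]
  · intro m _ hm
    induction Br b c m using TensorProduct.induction_on with
    | zero => simp
    | tmul u v =>
      simp [kappaL, Finsupp.sum_apply, hm]
    | add X Y hX hY => simp only [map_add, Finsupp.add_apply, hX, hY, add_zero]

theorem jacR_apply_zero (b a c : V) :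
    jacR 𝔽 V Br b a c (0, 0) =
      (TensorProduct.assoc 𝔽 V V V).symm (lTensor V (constCoeff Br b) (Br a c 0)) := by
  rw [jacR, Finsupp.sum_apply, Finsupp.sum_eq_single 0 _ (by simp)]
  · induction Br a c 0 using TensorProduct.induction_on with
    | zero => simp
    | tmul u v =>
      simp +contextual [nuR, Finsupp.sum_apply, Finsupp.single_apply, Prod.ext_iff, constCoeff]
    | add X Y hX hY => simp only [map_add, Finsupp.add_apply, hX, hY]
  · intro n _ hn
    induction Br a c n using TensorProduct.induction_on with
    | zero => simp
    | tmul u v =>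
      simp [nuR, Finsupp.sum_apply, hn]
    | add X Y hX hY => simp only [map_add, Finsupp.add_apply, hX, hY, add_zero]

theorem gammaC_apply_zero (n k : ℕ) (E : V ⊗[𝔽] V) (v : V) :
    gammaC 𝔽 V pd n k E v (0, 0) =
      if n = 0 then rho2 𝔽 V (E ⊗ₜ (((pd : Module.End 𝔽 V) ^ k) v)) else 0 := by
  simp only [gammaC, LinearMap.sum_apply, LinearMap.smul_apply, Finsupp.finsetSum_apply,
    Finsupp.smul_apply, LinearMap.comp_apply, LinearMap.lcomp_apply, LinearMap.llcomp_apply,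
    Finsupp.lsingle_apply, Finsupp.single_apply, Prod.ext_iff]
  rw [Finset.sum_eq_single_of_mem k (Finset.self_mem_range_succ k) fun j hj hjk => ?_]
  · by_cases hn : n = 0 <;> simp [hn, otimes1b]
  · refine Finset.sum_eq_zero fun s hs => ?_
    have : ¬(n + s = 0 ∧ k - j - s = 0) := by simp only [Finset.mem_range] at hj hs; omega
    rw [if_neg this, smul_zero]

variable (𝔽 V) in
noncomputable def mul3 : (V ⊗[𝔽] V) ⊗[𝔽] V →ₗ[𝔽] V := mul' 𝔽 V ∘ₗ rTensor V (mul' 𝔽 V)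

theorem mul3_rho2_tmul (E : V ⊗[𝔽] V) (w : V) :
    mul3 𝔽 V (rho2 𝔽 V (E ⊗ₜ w)) = insertMul 𝔽 V E w := by
  induction E using TensorProduct.induction_on with
  | zero => simp
  | tmul u v => simp [mul3, rho2, mul_assoc]
  | add X Y hX hY => simp only [TensorProduct.add_tmul, map_add, hX, hY, LinearMap.add_apply]

/-- The map `T` above: `u ⊗ v ↦ Σₖ m(Eₖ ⋆₁ ∂ᵏv)` where `{{u_λ c}} = Σₖ Eₖ λᵏ`. -/
noncomputable def tensorBracket (c : V) : V ⊗[𝔽] V →ₗ[𝔽] V :=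
  TensorProduct.lift (evalDeriv 𝔽 V pd ∘ₗ Br.flip c)

theorem tensorBracket_tmul (c u v : V) :
    tensorBracket pd Br c (u ⊗ₜ v) = evalDeriv 𝔽 V pd (Br u c) v := rfl

theorem mul3_jacC_apply_zero (c : V) (Q : ℕ →₀ V ⊗[𝔽] V) :
    mul3 𝔽 V (jacC 𝔽 V pd Br c Q (0, 0)) = tensorBracket pd Br c (Q 0) := by
  rw [jacC, Finsupp.sum_apply, map_finsuppSum, Finsupp.sum_eq_single 0 _ (by simp)]
  · induction Q 0 using TensorProduct.induction_on with
    | zero => simp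
    | tmul u v =>
      simp [tensorBracket_tmul, evalDeriv_apply, Finsupp.sum_apply, map_finsuppSum,
        gammaC_apply_zero, mul3_rho2_tmul]
    | add X Y hX hY => simp only [map_add, Finsupp.add_apply, hX, hY]
  · intro n _ hn
    induction Q n using TensorProduct.induction_on with
    | zero => simp
    | tmul u v => simp [Finsupp.sum_apply, gammaC_apply_zero, hn]
    | add X Y hX hY => simp only [map_add, Finsupp.add_apply, hX, hY, add_zero]

theorem mul3_rTensor_constCoeff (a : V) (X : V ⊗[𝔽] V) :
    mul3 𝔽 V (rTensor V (constCoeff Br a) X) = mul' 𝔽 V (rTensor V (sbLin Br a) X) := by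
  induction X using TensorProduct.induction_on with
  | zero => simp
  | tmul u v => simp [mul3, sbLin]
  | add X Y hX hY => simp only [map_add, hX, hY]

theorem mul3_assoc_symm_tmul (u : V) (Y : V ⊗[𝔽] V) :
    mul3 𝔽 V ((TensorProduct.assoc 𝔽 V V V).symm (u ⊗ₜ Y)) = u * mul' 𝔽 V Y := by
  induction Y using TensorProduct.induction_on with
  | zero => simp
  | tmul x y => simp [mul3, mul_assoc]
  | add Y Z hY hZ => simp only [TensorProduct.tmul_add, map_add, hY, hZ, mul_add]

theorem mul3_assoc_symm_lTensor_constCoeff (b : V) (X : V ⊗[𝔽] V) :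
    mul3 𝔽 V ((TensorProduct.assoc 𝔽 V V V).symm (lTensor V (constCoeff Br b) X)) =
      mul' 𝔽 V (lTensor V (sbLin Br b) X) := by
  induction X using TensorProduct.induction_on with
  | zero => simp
  | tmul u v => simp [mul3_assoc_symm_tmul, sbLin]
  | add X Y hX hY => simp only [map_add, hX, hY]

theorem sbP_mul'_right
    (hleft : ∀ a b c : V,
      Br a (b * c) = cw 𝔽 V (ract2 𝔽 V c) (Br a b) + cw 𝔽 V (lact2 𝔽 V b) (Br a c))
    (a : V) (X : V ⊗[𝔽] V) :
    sbP 𝔽 V Br a (mul' 𝔽 V X) =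
      mul' 𝔽 V (rTensor V (sbLin Br a) X) + mul' 𝔽 V (lTensor V (sbLin Br a) X) := by
  rw [← sbLin_apply]
  induction X using TensorProduct.induction_on with
  | zero => simp
  | tmul u v => simp [sbLin_apply, sbP_mul_right Br hleft]
  | add X Y hX hY => simp only [map_add, hX, hY]; abel

theorem sbP_mul'_left
    (hright : ∀ a b c : V,
      Br (a * b) c = lamShiftR 𝔽 V pd (Br a c) b + lamShiftL 𝔽 V pd (Br b c) a)
    (c : V) (X : V ⊗[𝔽] V) :
    sbP 𝔽 V Br (mul' 𝔽 V X) c = tensorBracket pd Br c X + tensorBracket pd Br c (swap2 𝔽 V X) := by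
  rw [← sbLin_apply]
  induction X using TensorProduct.induction_on with
  | zero => simp
  | tmul u v => simp [sbLin_apply, sbP_mul_left pd Br hright, tensorBracket_tmul]
  | add X Y hX hY => simp only [map_add, LinearMap.add_apply, hX, hY]; abel

theorem tensorBracket_d2 (hsesq1 : ∀ a b : V, Br (pd a) b = - lamMul 𝔽 V (Br a b))
    (c : V) (X : V ⊗[𝔽] V) : tensorBracket pd Br c (d2 𝔽 V pd X) = 0 := by
  induction X using TensorProduct.induction_on with
  | zero => simp
  | tmul u v => simp [d2, tensorBracket_tmul, hsesq1, evalDeriv_lamMul]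
  | add X Y hX hY => simp only [map_add, hX, hY, add_zero]

theorem jacobi_apply_zero
    (hjac : ∀ a b c : V,
      jacL 𝔽 V Br a b c - jacR 𝔽 V Br b a c = jacC 𝔽 V pd Br c (Br a b))
    (a b c : V) :
    mul' 𝔽 V (rTensor V (sbLin Br a) (Br b c 0)) - mul' 𝔽 V (lTensor V (sbLin Br b) (Br a c 0)) =
      tensorBracket pd Br c (Br a b 0) := by
  have h := congrArg (fun F => mul3 𝔽 V (F (0, 0))) (hjac a b c)
  simp only [Finsupp.sub_apply, map_sub, jacL_apply_zero, jacR_apply_zero, mul3_jacC_apply_zero,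
    mul3_rTensor_constCoeff, mul3_assoc_symm_lTensor_constCoeff] at h
  exact h

theorem sbP_jacobi
    (hsesq1 : ∀ a b : V, Br (pd a) b = - lamMul 𝔽 V (Br a b))
    (hleft : ∀ a b c : V,
      Br a (b * c) = cw 𝔽 V (ract2 𝔽 V c) (Br a b) + cw 𝔽 V (lact2 𝔽 V b) (Br a c))
    (hright : ∀ a b c : V,
      Br (a * b) c = lamShiftR 𝔽 V pd (Br a c) b + lamShiftL 𝔽 V pd (Br b c) a)
    (hskew : ∀ a b : V, Br a b = skewRHS 𝔽 V pd (Br b a))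
    (hjac : ∀ a b c : V,
      jacL 𝔽 V Br a b c - jacR 𝔽 V Br b a c = jacC 𝔽 V pd Br c (Br a b))
    (a b c : V) :
    sbP 𝔽 V Br a (sbP 𝔽 V Br b c) - sbP 𝔽 V Br b (sbP 𝔽 V Br a c) =
      sbP 𝔽 V Br (sbP 𝔽 V Br a b) c := by
  have hab := jacobi_apply_zero pd Br hjac a b c
  have hba := jacobi_apply_zero pd Br hjac b a c
  have hswap := apply_swap2_apply_zero_of_skew pd Br hskew (tensorBracket pd Br c)
    (tensorBracket_d2 pd Br hsesq1 c) a b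
  change sbP 𝔽 V Br a (mul' 𝔽 V (Br b c 0)) - sbP 𝔽 V Br b (mul' 𝔽 V (Br a c 0)) =
    sbP 𝔽 V Br (mul' 𝔽 V (Br a b 0)) c
  rw [sbP_mul'_right Br hleft, sbP_mul'_right Br hleft, sbP_mul'_left pd Br hright, hswap,
    ← hab, ← hba]
  abel

end Bracket

section Quotient

variable {pd : V →ₗ[𝔽] V} {B : V →ₗ[𝔽] V →ₗ[𝔽] V}

theorem commSub_sup_range_le_ker (h_pd_left : ∀ a b, B (pd a) b = 0)
    (h_mul_left : ∀ a b c, B (a * b) c = B (b * a) c) :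
    commSub 𝔽 V ⊔ LinearMap.range pd ≤ LinearMap.ker B := by
  refine sup_le (Submodule.span_le.mpr ?_) ?_
  · rintro _ ⟨u, w, rfl⟩
    ext c
    simp [h_mul_left u w]
  · rintro _ ⟨u, rfl⟩
    ext c
    simp [h_pd_left]

theorem commSub_sup_range_le_comap (h_pd_right : ∀ a b, B a (pd b) = pd (B a b))
    (h_mul_right : ∀ a b c, B a (b * c) = B a b * c + b * B a c) (a : V) :
    commSub 𝔽 V ⊔ LinearMap.range pd ≤ (commSub 𝔽 V ⊔ LinearMap.range pd).comap (B a) := by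
  refine sup_le (Submodule.span_le.mpr ?_) ?_
  · rintro _ ⟨u, w, rfl⟩
    have hu : B a u * w - w * B a u ∈ commSub 𝔽 V := Submodule.subset_span ⟨_, _, rfl⟩
    have hw : u * B a w - B a w * u ∈ commSub 𝔽 V := Submodule.subset_span ⟨_, _, rfl⟩
    refine Submodule.mem_sup_left ?_
    convert add_mem hu hw using 1
    simp only [map_sub, h_mul_right]
    abel
  · rintro _ ⟨u, rfl⟩
    exact Submodule.mem_sup_right ⟨B a u, (h_pd_right a u).symm⟩

theorem exists_lie_bracket_quotient (h_pd_left : ∀ a b, B (pd a) b = 0)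
    (h_mul_left : ∀ a b c, B (a * b) c = B (b * a) c)
    (h_pd_right : ∀ a b, B a (pd b) = pd (B a b))
    (h_mul_right : ∀ a b c, B a (b * c) = B a b * c + b * B a c)
    (h_symm : ∀ a b, B a b + B b a ∈ commSub 𝔽 V ⊔ LinearMap.range pd)
    (h_jacobi : ∀ a b c, B a (B b c) - B b (B a c) = B (B a b) c) :
    ∃ β : (V ⧸ (commSub 𝔽 V ⊔ LinearMap.range pd)) →ₗ[𝔽]
        (V ⧸ (commSub 𝔽 V ⊔ LinearMap.range pd)) →ₗ[𝔽]
        (V ⧸ (commSub 𝔽 V ⊔ LinearMap.range pd)),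
      (∀ a b : V, β (Submodule.Quotient.mk a) (Submodule.Quotient.mk b) =
        Submodule.Quotient.mk (B a b)) ∧
      (∀ x y, β x y = - β y x) ∧
      (∀ x y z, β x (β y z) - β y (β x z) = β (β x y) z) ∧
      (∃ ρ : (V ⧸ (commSub 𝔽 V ⊔ LinearMap.range pd)) →ₗ[𝔽] V →ₗ[𝔽] V,
        (∀ a b : V, ρ (Submodule.Quotient.mk a) b = B a b) ∧
        (∀ x, ∀ u w : V, ρ x (u * w) = ρ x u * w + u * ρ x w) ∧
        (∀ x, ρ x ∘ₗ pd = pd ∘ₗ ρ x) ∧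
        (∀ x y, ρ x ∘ₗ ρ y - ρ y ∘ₗ ρ x = ρ (β x y))) := by
  set S := commSub 𝔽 V ⊔ LinearMap.range pd
  have hker := commSub_sup_range_le_ker h_pd_left h_mul_left
  have hstab := commSub_sup_range_le_comap h_pd_right h_mul_right
  refine ⟨(B.compr₂ S.mkQ).liftQ₂ S S ?_ ?_, fun _ _ => rfl, ?_, ?_,
    S.liftQ B hker, fun _ _ => rfl, ?_, ?_, ?_⟩
  · intro a ha
    ext b
    simp [LinearMap.mem_ker.mp (hker ha)]
  · intro b hb
    ext a
    simpa using hstab a hb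
  · rintro ⟨a⟩ ⟨b⟩
    exact eq_neg_of_add_eq_zero_left ((Submodule.Quotient.mk_eq_zero S).mpr (h_symm a b))
  · rintro ⟨a⟩ ⟨b⟩ ⟨c⟩
    exact congrArg Submodule.Quotient.mk (h_jacobi a b c)
  · rintro ⟨a⟩ u w
    exact h_mul_right a u w
  · rintro ⟨a⟩
    ext b
    exact h_pd_right a b
  · rintro ⟨a⟩ ⟨b⟩
    ext c
    exact h_jacobi a b c

end Quotient

end DoublePoissonVertexAlgebra

theorem statement_19_general (𝔽 : Type) [Field 𝔽] (V : Type) [Ring V] [Algebra 𝔽 V]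
    (pd : V →ₗ[𝔽] V) (hpd : ∀ a b : V, pd (a * b) = pd a * b + a * pd b)
    (Br : V →ₗ[𝔽] V →ₗ[𝔽] (ℕ →₀ V ⊗[𝔽] V))
    -- sesquilinearity
    (hsesq1 : ∀ a b : V, Br (pd a) b = - lamMul 𝔽 V (Br a b))
    (hsesq2 : ∀ a b : V, Br a (pd b) = lamMul 𝔽 V (Br a b) + cw 𝔽 V (d2 𝔽 V pd) (Br a b))
    -- left and right Leibniz rules
    (hleft : ∀ a b c : V,
      Br a (b * c) = cw 𝔽 V (ract2 𝔽 V c) (Br a b) + cw 𝔽 V (lact2 𝔽 V b) (Br a c))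
    (hright : ∀ a b c : V,
      Br (a * b) c = lamShiftR 𝔽 V pd (Br a c) b + lamShiftL 𝔽 V pd (Br b c) a)
    -- skewsymmetry
    (hskew : ∀ a b : V, Br a b = skewRHS 𝔽 V pd (Br b a))
    -- Jacobi identity
    (hjac : ∀ a b c : V,
      jacL 𝔽 V Br a b c - jacR 𝔽 V Br b a c = jacC 𝔽 V pd Br c (Br a b)) :
    -- (i)
    (∀ a b : V, sbP 𝔽 V Br (pd a) b = 0) ∧
    (∀ a b c : V, sbP 𝔽 V Br (a * b) c = sbP 𝔽 V Br (b * a) c) ∧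
    -- (ii)
    (∀ a b : V, sbP 𝔽 V Br a (pd b) = pd (sbP 𝔽 V Br a b)) ∧
    (∀ a b c : V, sbP 𝔽 V Br a (b * c) = sbP 𝔽 V Br a b * c + b * sbP 𝔽 V Br a c) ∧
    -- (iii)
    (∀ a b : V, sbP 𝔽 V Br a b + sbP 𝔽 V Br b a ∈ commSub 𝔽 V ⊔ LinearMap.range pd) ∧
    -- (iv)
    (∀ a b c : V, sbP 𝔽 V Br a (sbP 𝔽 V Br b c) - sbP 𝔽 V Br b (sbP 𝔽 V Br a c) =
      sbP 𝔽 V Br (sbP 𝔽 V Br a b) c) ∧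
    -- consequently: the Lie algebra structure on `V/([V,V] + ∂V)` and its action
    (∃ β : (V ⧸ (commSub 𝔽 V ⊔ LinearMap.range pd)) →ₗ[𝔽]
        (V ⧸ (commSub 𝔽 V ⊔ LinearMap.range pd)) →ₗ[𝔽]
        (V ⧸ (commSub 𝔽 V ⊔ LinearMap.range pd)),
      (∀ a b : V, β (Submodule.Quotient.mk a) (Submodule.Quotient.mk b) =
        Submodule.Quotient.mk (sbP 𝔽 V Br a b)) ∧
      (∀ x y, β x y = - β y x) ∧
      (∀ x y z, β x (β y z) - β y (β x z) = β (β x y) z) ∧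
      (∃ ρ : (V ⧸ (commSub 𝔽 V ⊔ LinearMap.range pd)) →ₗ[𝔽] V →ₗ[𝔽] V,
        (∀ a b : V, ρ (Submodule.Quotient.mk a) b = sbP 𝔽 V Br a b) ∧
        (∀ x, ∀ u w : V, ρ x (u * w) = ρ x u * w + u * ρ x w) ∧
        (∀ x, ρ x ∘ₗ pd = pd ∘ₗ ρ x) ∧
        (∀ x y, ρ x ∘ₗ ρ y - ρ y ∘ₗ ρ x = ρ (β x y)))) := by
  have h_pd_left := sbP_pd_left pd Br hsesq1
  have h_mul_left := sbP_mul_left_comm pd Br hright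
  have h_pd_right := sbP_pd_right Br hpd hsesq2
  have h_mul_right := sbP_mul_right Br hleft
  have h_symm := sbP_add_sbP_swap_mem Br hpd hskew
  have h_jacobi := sbP_jacobi pd Br hsesq1 hleft hright hskew hjac
  exact ⟨h_pd_left, h_mul_left, h_pd_right, h_mul_right, h_symm, h_jacobi,
    exists_lie_bracket_quotient (B := sbLin Br) h_pd_left h_mul_left h_pd_right h_mul_right
      h_symm h_jacobi⟩

/-- properties of the bracket `{a,b} = m({{a_λ b}}|_{λ=0})` of a double
Poisson vertex algebra `(V, ∂, {{−_λ−}})`, and the induced Lie algebra structure on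
`V/([V,V] + ∂V)` together with its representation on `V` by derivations commuting
with `∂`. -/
theorem statement_19 (𝔽 : Type) [Field 𝔽] [CharZero 𝔽] (V : Type) [Ring V] [Algebra 𝔽 V]
    (pd : V →ₗ[𝔽] V) (hpd : ∀ a b : V, pd (a * b) = pd a * b + a * pd b)
    (Br : V →ₗ[𝔽] V →ₗ[𝔽] (ℕ →₀ V ⊗[𝔽] V))
    -- sesquilinearity
    (hsesq1 : ∀ a b : V, Br (pd a) b = - lamMul 𝔽 V (Br a b))
    (hsesq2 : ∀ a b : V, Br a (pd b) = lamMul 𝔽 V (Br a b) + cw 𝔽 V (d2 𝔽 V pd) (Br a b))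
    -- left and right Leibniz rules
    (hleft : ∀ a b c : V,
      Br a (b * c) = cw 𝔽 V (ract2 𝔽 V c) (Br a b) + cw 𝔽 V (lact2 𝔽 V b) (Br a c))
    (hright : ∀ a b c : V,
      Br (a * b) c = lamShiftR 𝔽 V pd (Br a c) b + lamShiftL 𝔽 V pd (Br b c) a)
    -- skewsymmetry
    (hskew : ∀ a b : V, Br a b = skewRHS 𝔽 V pd (Br b a))
    -- Jacobi identity
    (hjac : ∀ a b c : V,
      jacL 𝔽 V Br a b c - jacR 𝔽 V Br b a c = jacC 𝔽 V pd Br c (Br a b)) :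
    -- (i)
    (∀ a b : V, sbP 𝔽 V Br (pd a) b = 0) ∧
    (∀ a b c : V, sbP 𝔽 V Br (a * b) c = sbP 𝔽 V Br (b * a) c) ∧
    -- (ii)
    (∀ a b : V, sbP 𝔽 V Br a (pd b) = pd (sbP 𝔽 V Br a b)) ∧
    (∀ a b c : V, sbP 𝔽 V Br a (b * c) = sbP 𝔽 V Br a b * c + b * sbP 𝔽 V Br a c) ∧
    -- (iii)
    (∀ a b : V, sbP 𝔽 V Br a b + sbP 𝔽 V Br b a ∈ commSub 𝔽 V ⊔ LinearMap.range pd) ∧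
    -- (iv)
    (∀ a b c : V, sbP 𝔽 V Br a (sbP 𝔽 V Br b c) - sbP 𝔽 V Br b (sbP 𝔽 V Br a c) =
      sbP 𝔽 V Br (sbP 𝔽 V Br a b) c) ∧
    -- consequently: the Lie algebra structure on `V/([V,V] + ∂V)` and its action
    (∃ β : (V ⧸ (commSub 𝔽 V ⊔ LinearMap.range pd)) →ₗ[𝔽]
        (V ⧸ (commSub 𝔽 V ⊔ LinearMap.range pd)) →ₗ[𝔽]
        (V ⧸ (commSub 𝔽 V ⊔ LinearMap.range pd)),
      (∀ a b : V, β (Submodule.Quotient.mk a) (Submodule.Quotient.mk b) =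
        Submodule.Quotient.mk (sbP 𝔽 V Br a b)) ∧
      (∀ x y, β x y = - β y x) ∧
      (∀ x y z, β x (β y z) - β y (β x z) = β (β x y) z) ∧
      (∃ ρ : (V ⧸ (commSub 𝔽 V ⊔ LinearMap.range pd)) →ₗ[𝔽] V →ₗ[𝔽] V,
        (∀ a b : V, ρ (Submodule.Quotient.mk a) b = sbP 𝔽 V Br a b) ∧
        (∀ x, ∀ u w : V, ρ x (u * w) = ρ x u * w + u * ρ x w) ∧
        (∀ x, ρ x ∘ₗ pd = pd ∘ₗ ρ x) ∧
        (∀ x y, ρ x ∘ₗ ρ y - ρ y ∘ₗ ρ x = ρ (β x y)))) :=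
  statement_19_general 𝔽 V pd hpd Br hsesq1 hsesq2 hleft hright hskew hjac
end DPA
end
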